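/- arXiv:2208.11634 — 2 statements merged into one kernel-verified Lean document; each statement's English description precedes it below -/
import Mathlib

section
/- Let A ∈ ℝ^{n×n}, B ∈ ℝ^{n×m}, U0 ∈ ℝ^{m×T}, X0, X1, D0 ∈ ℝ^{n×T}, Δ ∈ ℝ^{n×s}, and Ω ∈ ℝ^{n×n} with Ω ≻ 0. Suppose: (i) X1 = A·X0 + B·U0 + D0 and D0·D0ᵀ ⪯ Δ·Δᵀ; (ii) there exist ε > 0 and Y ∈ ℝ^{T×n} such that the block matrix [[X1·Y + (X1·Y)ᵀ + Ω + ε·Δ·Δᵀ, Yᵀ],[Y, −ε·I_T]] is negative definite and X0·Y is symmetric positive definite. Set S := (X0·Y)⁻¹ and K := U0·Y·S. Then S ≻ 0 and S·(A+B·K) + (A+B·K)ᵀ·S + S·Ω·S ≺ 0. -/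
/-!
With `P = X0 * Y` the data equation gives `X1 * Y = (A + B * K) * P + D0 * Y`. A Schur complement
turns the LMI into `X1 * Y + (X1 * Y)ᵀ + Ω + ε • (Δ * Δᵀ) + ε⁻¹ • (Yᵀ * Y) ≺ 0`, and the
matrix Young inequality
`-(D0 * Y + Yᵀ * D0ᵀ) ⪯ ε • (D0 * D0ᵀ) + ε⁻¹ • (Yᵀ * Y) ⪯ ε • (Δ * Δᵀ) + ε⁻¹ • (Yᵀ * Y)`
absorbs the unknown noise, leaving `(A + B * K) * P + P * (A + B * K)ᵀ + Ω ≺ 0`.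
Conjugating by `S = P⁻¹` gives the Lyapunov inequality.
-/

open Matrix

namespace Matrix

variable {m n : Type*} [Fintype m] [Fintype n]

theorem PosDef.schur_complement_of_fromBlocks₂₂ {K : Type*} [Field K] [PartialOrder K]
    [StarRing K] [DecidableEq n] {A : Matrix m m K} {B : Matrix m n K} {D : Matrix n n K}
    (hD : D.PosDef)
    (h : (fromBlocks A B Bᴴ D).PosDef) : (A - B * D⁻¹ * Bᴴ).PosDef := by
  have := hD.isUnit.invertible
  refine .of_dotProduct_mulVec_pos ((IsHermitian.fromBlocks₂₂ A B hD.1).mp h.1) fun x hx => ?_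
  have hpos := h.dotProduct_mulVec_pos (x := x ⊕ᵥ -((D⁻¹ * Bᴴ) *ᵥ x))
    fun h0 => hx (funext fun i => congrFun h0 (Sum.inl i))
  rwa [dotProduct_mulVec, schur_complement_eq₂₂ A B x _ hD.1, add_neg_cancel, star_zero,
    zero_vecMul, zero_dotProduct, zero_add, ← dotProduct_mulVec] at hpos

theorem PosDef.neg_sub_of_neg_fromBlocks [DecidableEq m] {ε : ℝ} (hε : 0 < ε)
    {M : Matrix n n ℝ} {Y : Matrix m n ℝ}
    (h : (-(fromBlocks M Yᵀ Y (-(ε • (1 : Matrix m m ℝ))))).PosDef) :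
    (-M - ε⁻¹ • (Yᵀ * Y)).PosDef := by
  have hblocks : -(fromBlocks M Yᵀ Y (-(ε • (1 : Matrix m m ℝ))))
      = fromBlocks (-M) (-Yᵀ) (-Yᵀ)ᴴ (ε • 1) := by
    simp [fromBlocks_neg, conjTranspose_eq_transpose_of_trivial]
  have hinv : (ε • (1 : Matrix m m ℝ))⁻¹ = ε⁻¹ • 1 :=
    inv_eq_left_inv (by simp [smul_smul, mul_inv_cancel₀ hε.ne'])
  have := (PosDef.one.smul hε).schur_complement_of_fromBlocks₂₂ (hblocks ▸ h)
  simpa [hinv, conjTranspose_eq_transpose_of_trivial] using this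

theorem posSemidef_young (D : Matrix m n ℝ) (Y : Matrix n m ℝ) {ε : ℝ} (hε : 0 < ε) :
    (ε • (D * Dᵀ) + ε⁻¹ • (Yᵀ * Y) + (D * Y + Yᵀ * Dᵀ)).PosSemidef := by
  set C := √ε • D + (√ε)⁻¹ • Yᵀ
  have hsq : √ε * √ε = ε := Real.mul_self_sqrt hε.le
  have hne : √ε ≠ 0 := (Real.sqrt_pos.2 hε).ne'
  convert posSemidef_self_mul_conjTranspose C using 1
  simp only [C, conjTranspose_eq_transpose_of_trivial, transpose_add, transpose_smul,
    transpose_transpose, Matrix.add_mul, Matrix.mul_add, Matrix.smul_mul, Matrix.mul_smul,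
    smul_add, smul_smul, hsq, ← mul_inv, mul_inv_cancel₀ hne, inv_mul_cancel₀ hne, one_smul]
  abel

theorem posDef_neg_lyapunov_of_perturbation_bound {k : Type*} [Fintype k]
    {F P Ω G : Matrix n n ℝ} {D₀ : Matrix n m ℝ} {Y : Matrix m n ℝ} {Δ : Matrix n k ℝ}
    {ε : ℝ} (hε : 0 < ε) (hG : G = F * P + D₀ * Y) (hP : P.IsSymm)
    (hD₀ : (Δ * Δᵀ - D₀ * D₀ᵀ).PosSemidef)
    (h : (-(G + Gᵀ + Ω + ε • (Δ * Δᵀ)) - ε⁻¹ • (Yᵀ * Y)).PosDef) :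
    (-(F * P + P * Fᵀ + Ω)).PosDef := by
  have hsum := (h.add_posSemidef (hD₀.smul hε.le)).add_posSemidef (posSemidef_young D₀ Y hε)
  convert hsum using 1
  rw [hG, transpose_add, transpose_mul, transpose_mul, hP.eq, smul_sub]
  abel

theorem PosDef.neg_lyapunov_inv [DecidableEq n] {F P Ω : Matrix n n ℝ} (hP : P.PosDef)
    (h : (-(F * P + P * Fᵀ + Ω)).PosDef) :
    (-(P⁻¹ * F + Fᵀ * P⁻¹ + P⁻¹ * Ω * P⁻¹)).PosDef := by
  have hdet : IsUnit P.det := (isUnit_iff_isUnit_det P).1 hP.isUnit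
  rw [← (isUnit_nonsing_inv_iff.2 hP.isUnit).posDef_star_left_conjugate_iff,
    star_eq_conjTranspose, hP.inv.1.eq] at h
  convert h using 1
  simp only [Matrix.mul_neg, Matrix.neg_mul, Matrix.mul_add, Matrix.add_mul, Matrix.mul_assoc,
    mul_nonsing_inv P hdet, Matrix.mul_one]
  rw [← Matrix.mul_assoc P⁻¹ P, nonsing_inv_mul P hdet, Matrix.one_mul]

end Matrix

theorem stmt_11_general (n m T s : ℕ)
    (A : Matrix (Fin n) (Fin n) ℝ) (B : Matrix (Fin n) (Fin m) ℝ)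
    (U0 : Matrix (Fin m) (Fin T) ℝ) (X0 X1 D0 : Matrix (Fin n) (Fin T) ℝ)
    (Δ : Matrix (Fin n) (Fin s) ℝ)
    (Ω : Matrix (Fin n) (Fin n) ℝ)
    (hdata : X1 = A * X0 + B * U0 + D0)
    (hD0 : (Δ * Δᵀ - D0 * D0ᵀ).PosSemidef)
    (ε : ℝ) (hε : 0 < ε) (Y : Matrix (Fin T) (Fin n) ℝ)
    (hLMI : (-(Matrix.fromBlocks
        (X1 * Y + (X1 * Y)ᵀ + Ω + ε • (Δ * Δᵀ)) Yᵀ Y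
        (-(ε • (1 : Matrix (Fin T) (Fin T) ℝ))))).PosDef)
    (hX0Y : (X0 * Y).PosDef)
    (S : Matrix (Fin n) (Fin n) ℝ) (hSdef : S = (X0 * Y)⁻¹)
    (K : Matrix (Fin m) (Fin n) ℝ) (hKdef : K = U0 * Y * S) :
    S.PosDef ∧
      (-(S * (A + B * K) + (A + B * K)ᵀ * S + S * Ω * S)).PosDef := by
  subst hSdef hKdef
  refine ⟨hX0Y.inv, hX0Y.neg_lyapunov_inv ?_⟩
  have hX1Y : X1 * Y = (A + B * (U0 * Y * (X0 * Y)⁻¹)) * (X0 * Y) + D0 * Y := by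
    rw [hdata, Matrix.add_mul _ _ (X0 * Y), Matrix.mul_assoc B, Matrix.mul_assoc (U0 * Y),
      nonsing_inv_mul _ ((isUnit_iff_isUnit_det _).1 hX0Y.isUnit)]
    simp only [Matrix.add_mul, Matrix.mul_assoc, Matrix.mul_one]
  exact posDef_neg_lyapunov_of_perturbation_bound hε hX1Y
    (isHermitian_iff_isSymm.1 hX0Y.1) hD0 (hLMI.neg_sub_of_neg_fromBlocks hε)

theorem stmt_11 (n m T s : ℕ)
    (A : Matrix (Fin n) (Fin n) ℝ) (B : Matrix (Fin n) (Fin m) ℝ)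
    (U0 : Matrix (Fin m) (Fin T) ℝ) (X0 X1 D0 : Matrix (Fin n) (Fin T) ℝ)
    (Δ : Matrix (Fin n) (Fin s) ℝ)
    (Ω : Matrix (Fin n) (Fin n) ℝ) (hΩ : Ω.PosDef)
    (hdata : X1 = A * X0 + B * U0 + D0)
    (hD0 : (Δ * Δᵀ - D0 * D0ᵀ).PosSemidef)
    (ε : ℝ) (hε : 0 < ε) (Y : Matrix (Fin T) (Fin n) ℝ)
    (hLMI : (-(Matrix.fromBlocks
        (X1 * Y + (X1 * Y)ᵀ + Ω + ε • (Δ * Δᵀ)) Yᵀ Y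
        (-(ε • (1 : Matrix (Fin T) (Fin T) ℝ))))).PosDef)
    (hX0Y : (X0 * Y).PosDef)
    (S : Matrix (Fin n) (Fin n) ℝ) (hSdef : S = (X0 * Y)⁻¹)
    (K : Matrix (Fin m) (Fin n) ℝ) (hKdef : K = U0 * Y * S) :
    S.PosDef ∧
      (-(S * (A + B * K) + (A + B * K)ᵀ * S + S * Ω * S)).PosDef :=
  stmt_11_general n m T s A B U0 X0 X1 D0 Δ Ω hdata hD0 ε hε Y hLMI hX0Y S hSdef K hKdef
end

section
/- Let A ∈ ℝ^{n×n}, B ∈ ℝ^{n×m}, K ∈ ℝ^{m×n}, σ > 0, and let c_A > 0 and c_Φ ≥ 0 satisfy ‖A‖ ≤ c_A and ‖A+B·K‖ ≤ c_Φ. Define τ_d(σ) := (1/c_A)·log((σ/(1+σ))·c_A/max{c_Φ, 1} + 1). Then: (i) τ_d(σ) ≤ τ_m(σ), where τ_m(σ) := (1/‖A‖)·log((σ/(1+σ))·‖A‖/max{‖A+B·K‖, 1} + 1) if A ≠ 0 and τ_m(σ) := (σ/(1+σ))·(1/max{‖A+B·K‖, 1}) if A = 0; and consequently (ii) for every T >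 0, every continuous d : [0,T] → ℝⁿ, and every differentiable x : [0,T] → ℝⁿ with x′(t) = A·x(t) + B·K·x(0) + d(t) on [0,T], one has ‖x(0) − x(t)‖ ≤ σ·(‖x(t)‖ + sup_{s∈[0,t]}‖d(s)‖) for all t ∈ [0, min(T, τ_d(σ))]. -/
/-!
For (i), `a ↦ a⁻¹ log (c a + 1)` is decreasing on `(0, ∞)`: it is `c` times the slope of the
concave function `log` between `1` and `c a + 1`. So shrinking `c_A` to `‖A‖` and `max c_Φ 1` to
`max ‖A + BK‖ 1` can only increase the time; when `A = 0` one uses `log (1 + s) ≤ s` instead.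

For (ii), write `A x(t) + BK x(0) = A (x(t) - x(0)) + (A + BK) x(0)`. Grönwall's inequality bounds
`‖x(t) - x(0)‖` by `(‖(A + BK) x(0)‖ + sup ‖d‖) / c_A · (exp (c_A t) - 1)`, and `t ≤ τ_d` makes the
exponential factor at most `β c_A / max c_Φ 1` with `β = σ / (1 + σ)`. Together with
`‖x(0)‖ ≤ ‖x(t)‖ + ‖x(0) - x(t)‖` this gives
`‖x(0) - x(t)‖ ≤ β (‖x(t)‖ + ‖x(0) - x(t)‖ + sup ‖d‖)`, which rearranges to the claim.
-/

open Matrix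

/-- The operator norm on square matrices induced by the Euclidean norm
(spectral norm). -/
noncomputable def l2opNorm {n : ℕ} (A : Matrix (Fin n) (Fin n) ℝ) : ℝ :=
  ‖(Matrix.toEuclideanCLM (𝕜 := ℝ) A :
      EuclideanSpace ℝ (Fin n) →L[ℝ] EuclideanSpace ℝ (Fin n))‖

open Real Set

theorem inv_mul_log_mul_add_one_le_of_le {c a b : ℝ} (hc : 0 < c) (ha : 0 < a) (hab : a ≤ b) :
    b⁻¹ * log (c * b + 1) ≤ a⁻¹ * log (c * a + 1) := by
  have mem : ∀ {y}, 0 < y → c * y + 1 ∈ {z ∈ Ioi (0 : ℝ) | 1 < z} := fun hy =>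
    ⟨by simp only [mem_Ioi]; positivity, by simp only [lt_add_iff_pos_left]; positivity⟩
  have h := strictConcaveOn_log_Ioi.concaveOn.antitoneOn_slope_gt (mem_Ioi.2 one_pos)
    (mem ha) (mem (ha.trans_le hab)) (by gcongr)
  simp only [slope_def_field, log_one, sub_zero, add_sub_cancel_right] at h
  calc b⁻¹ * log (c * b + 1) = c * (log (c * b + 1) / (c * b)) := by field_simp
    _ ≤ c * (log (c * a + 1) / (c * a)) := by gcongr
    _ = a⁻¹ * log (c * a + 1) := by field_simp

theorem one_div_mul_log_mul_div_add_one_le_of_le {β a c M M' : ℝ} (hβ : 0 < β) (ha : 0 < a)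
    (hac : a ≤ c) (hM' : 0 < M') (hM : M' ≤ M) :
    1 / c * log (β * (c / M) + 1) ≤ 1 / a * log (β * (a / M') + 1) := by
  have hc := ha.trans_le hac
  have hM0 := hM'.trans_le hM
  calc 1 / c * log (β * (c / M) + 1) ≤ c⁻¹ * log (β / M' * c + 1) := by
        rw [one_div, div_mul_eq_mul_div, mul_div_assoc]
        gcongr
    _ ≤ a⁻¹ * log (β / M' * a + 1) := inv_mul_log_mul_add_one_le_of_le (by positivity) ha hac
    _ = 1 / a * log (β * (a / M') + 1) := by ring_nf

theorem one_div_mul_log_mul_div_add_one_le {β c M M' : ℝ} (hβ : 0 ≤ β) (hc : 0 < c)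
    (hM' : 0 < M') (hM : M' ≤ M) : 1 / c * log (β * (c / M) + 1) ≤ β * (1 / M') := by
  have hM0 := hM'.trans_le hM
  have hlog := log_le_sub_one_of_pos (x := β * (c / M) + 1) (by positivity)
  calc 1 / c * log (β * (c / M) + 1) ≤ 1 / c * (β * (c / M)) := by gcongr; linarith
    _ = β * (1 / M) := by field_simp
    _ ≤ β * (1 / M') := by gcongr

theorem exp_mul_sub_one_le_of_le_one_div_mul_log {c u t : ℝ} (hc : 0 < c) (hu : 0 < u + 1)
    (ht : t ≤ 1 / c * log (u + 1)) : exp (c * t) - 1 ≤ u := by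
  have : exp (c * t) ≤ u + 1 := by
    calc exp (c * t) ≤ exp (c * (1 / c * log (u + 1))) := by gcongr
      _ = u + 1 := by rw [← mul_assoc, mul_one_div_cancel hc.ne', one_mul, exp_log hu]
  linarith

section LinearODE

variable {E : Type*} [NormedAddCommGroup E] [NormedSpace ℝ E]

theorem norm_sub_le_of_hasDerivWithinAt_linear {L : E →L[ℝ] E} {v : E} {d x : ℝ → E}
    {a D t : ℝ} (ha : 0 < a) (hL : ‖L‖ ≤ a) (ht : 0 ≤ t) (hd : ∀ s ∈ Icc 0 t, ‖d s‖ ≤ D)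
    (hx : ∀ s ∈ Icc 0 t, HasDerivWithinAt x (L (x s - x 0) + v + d s) (Icc 0 t) s) :
    ‖x t - x 0‖ ≤ (‖v‖ + D) / a * (exp (a * t) - 1) := by
  have hcont : ContinuousOn (fun s => x s - x 0) (Icc 0 t) :=
    fun s hs => (hx s hs).continuousWithinAt.sub continuousWithinAt_const
  have hderiv : ∀ s ∈ Ico 0 t,
      HasDerivWithinAt (fun s => x s - x 0) (L (x s - x 0) + v + d s) (Ici s) s := fun s hs =>
    ((hx s (Ico_subset_Icc_self hs)).sub_const (x 0)).mono_of_mem_nhdsWithin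
      (Filter.mem_of_superset (Icc_mem_nhdsGE_of_mem ⟨le_rfl, hs.2⟩) (Icc_subset_Icc hs.1 le_rfl))
  have hbound : ∀ s ∈ Ico 0 t, ‖L (x s - x 0) + v + d s‖ ≤ a * ‖x s - x 0‖ + (‖v‖ + D) :=
    fun s hs => calc
      ‖L (x s - x 0) + v + d s‖ ≤ ‖L (x s - x 0)‖ + ‖v‖ + ‖d s‖ := norm_add₃_le
      _ ≤ a * ‖x s - x 0‖ + ‖v‖ + D := by
        gcongr
        · exact L.le_of_opNorm_le hL _
        · exact hd s (Ico_subset_Icc_self hs)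
      _ = a * ‖x s - x 0‖ + (‖v‖ + D) := by ring
  have := norm_le_gronwallBound_of_norm_deriv_right_le (δ := 0) hcont hderiv (by simp) hbound
    t ⟨ht, le_rfl⟩
  simpa [gronwallBound_of_K_ne_0 ha.ne'] using this

theorem norm_sub_le_mul_of_le_one_div_mul_log {L : E →L[ℝ] E} {v : E} {d x : ℝ → E}
    {σ a M D t : ℝ} (hσ : 0 < σ) (ha : 0 < a) (hL : ‖L‖ ≤ a) (hM : 1 ≤ M)
    (hv : ‖v‖ ≤ M * ‖x 0‖) (ht0 : 0 ≤ t) (ht : t ≤ 1 / a * log (σ / (1 + σ) * (a / M) + 1))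
    (hd : ∀ s ∈ Icc 0 t, ‖d s‖ ≤ D)
    (hx : ∀ s ∈ Icc 0 t, HasDerivWithinAt x (L (x s - x 0) + v + d s) (Icc 0 t) s) :
    ‖x 0 - x t‖ ≤ σ * (‖x t‖ + D) := by
  have hM0 : 0 < M := one_pos.trans_le hM
  have hD : 0 ≤ D := (norm_nonneg _).trans (hd 0 ⟨le_rfl, ht0⟩)
  have hexp := exp_mul_sub_one_le_of_le_one_div_mul_log ha (by positivity) ht
  have key : ‖x 0 - x t‖ ≤ σ / (1 + σ) * (‖x t‖ + ‖x 0 - x t‖ + D) := calc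
    ‖x 0 - x t‖ = ‖x t - x 0‖ := norm_sub_rev _ _
    _ ≤ (‖v‖ + D) / a * (exp (a * t) - 1) :=
      norm_sub_le_of_hasDerivWithinAt_linear ha hL ht0 hd hx
    _ ≤ (M * ‖x 0‖ + D) / a * (σ / (1 + σ) * (a / M)) := by
      gcongr
      exact sub_nonneg.2 (one_le_exp (by positivity))
    _ = σ / (1 + σ) * (‖x 0‖ + D / M) := by field_simp
    _ ≤ σ / (1 + σ) * (‖x t‖ + ‖x 0 - x t‖ + D) := by
      gcongr
      · exact norm_le_norm_add_norm_sub' _ _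
      · exact div_le_self hD hM
  rw [div_mul_eq_mul_div, le_div_iff₀ (by positivity)] at key
  linarith

end LinearODE

theorem l2opNorm_pos {n : ℕ} {A : Matrix (Fin n) (Fin n) ℝ} (hA : A ≠ 0) : 0 < l2opNorm A :=
  norm_pos_iff.2 fun h => hA (by simpa using h)

theorem equiv_symm_mulVec_add_mulVec {n : ℕ} (A C : Matrix (Fin n) (Fin n) ℝ)
    (x y : EuclideanSpace ℝ (Fin n)) :
    (EuclideanSpace.equiv (Fin n) ℝ).symm (A *ᵥ x + C *ᵥ y) =
      toEuclideanCLM (𝕜 := ℝ) A (x - y) + toEuclideanCLM (𝕜 := ℝ) (A + C) y := by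
  have h (M : Matrix (Fin n) (Fin n) ℝ) (v : EuclideanSpace ℝ (Fin n)) :
      (EuclideanSpace.equiv (Fin n) ℝ).symm (M *ᵥ v) = toEuclideanCLM (𝕜 := ℝ) M v := rfl
  rw [map_add, h, h, map_add, _root_.add_apply, map_sub]
  abel

theorem stmt_17_general (n m : ℕ)
    (A : Matrix (Fin n) (Fin n) ℝ) (B : Matrix (Fin n) (Fin m) ℝ)
    (K : Matrix (Fin m) (Fin n) ℝ) (σ : ℝ) (hσ : 0 < σ)
    (cA cΦ : ℝ) (hcA : 0 < cA)
    (hA : l2opNorm A ≤ cA) (hΦ : l2opNorm (A + B * K) ≤ cΦ)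
    (τd τm : ℝ)
    (hτd : τd = (1 / cA) * Real.log ((σ / (1 + σ)) * (cA / max cΦ 1) + 1))
    (hτm : τm = if A ≠ 0 then
        (1 / l2opNorm A) *
          Real.log ((σ / (1 + σ)) * (l2opNorm A / max (l2opNorm (A + B * K)) 1) + 1)
      else (σ / (1 + σ)) * (1 / max (l2opNorm (A + B * K)) 1)) :
    τd ≤ τm ∧
      ∀ T : ℝ, 0 < T →
        ∀ d x : ℝ → EuclideanSpace ℝ (Fin n),
          ContinuousOn d (Set.Icc 0 T) →
          (∀ t ∈ Set.Icc (0 : ℝ) T,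
            HasDerivWithinAt x
              ((EuclideanSpace.equiv (Fin n) ℝ).symm
                  (A.mulVec (x t) + (B * K).mulVec (x 0)) + d t)
              (Set.Icc 0 T) t) →
          ∀ t ∈ Set.Icc (0 : ℝ) (min T τd),
            ‖x 0 - x t‖ ≤ σ * (‖x t‖ + sSup ((fun u => ‖d u‖) '' Set.Icc 0 t)) := by
  have hMM : max (l2opNorm (A + B * K)) 1 ≤ max cΦ 1 := max_le_max_right 1 hΦ
  have hM' : 0 < max (l2opNorm (A + B * K)) 1 := lt_max_of_lt_right one_pos
  refine ⟨?_, fun T _ d x hd hx t ⟨ht0, ht⟩ => ?_⟩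
  · rw [hτd, hτm]
    split_ifs with hA0
    · exact one_div_mul_log_mul_div_add_one_le_of_le (by positivity) (l2opNorm_pos hA0) hA hM'
        hMM
    · exact one_div_mul_log_mul_div_add_one_le (by positivity) hcA hM' hMM
  · have htT : t ≤ T := ht.trans (min_le_left _ _)
    have hdD : ∀ s ∈ Icc 0 t, ‖d s‖ ≤ sSup ((fun u => ‖d u‖) '' Icc 0 t) := fun s hs =>
      (hd.mono (Icc_subset_Icc_right htT)).norm.le_sSup_image_Icc hs
    have hv : ‖toEuclideanCLM (𝕜 := ℝ) (A + B * K) (x 0)‖ ≤ max cΦ 1 * ‖x 0‖ :=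
      ContinuousLinearMap.le_of_opNorm_le _ (hΦ.trans (le_max_left _ _)) _
    refine norm_sub_le_mul_of_le_one_div_mul_log hσ hcA hA (le_max_right _ _) hv ht0
      (hτd ▸ ht.trans (min_le_right _ _)) hdD fun s hs => ?_
    rw [← equiv_symm_mulVec_add_mulVec]
    exact (hx s ⟨hs.1, hs.2.trans htT⟩).mono (Icc_subset_Icc_right htT)

theorem stmt_17 (n m : ℕ)
    (A : Matrix (Fin n) (Fin n) ℝ) (B : Matrix (Fin n) (Fin m) ℝ)
    (K : Matrix (Fin m) (Fin n) ℝ) (σ : ℝ) (hσ : 0 < σ)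
    (cA cΦ : ℝ) (hcA : 0 < cA) (hcΦ : 0 ≤ cΦ)
    (hA : l2opNorm A ≤ cA) (hΦ : l2opNorm (A + B * K) ≤ cΦ)
    (τd τm : ℝ)
    (hτd : τd = (1 / cA) * Real.log ((σ / (1 + σ)) * (cA / max cΦ 1) + 1))
    (hτm : τm = if A ≠ 0 then
        (1 / l2opNorm A) *
          Real.log ((σ / (1 + σ)) * (l2opNorm A / max (l2opNorm (A + B * K)) 1) + 1)
      else (σ / (1 + σ)) * (1 / max (l2opNorm (A + B * K)) 1)) :
    τd ≤ τm ∧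
      ∀ T : ℝ, 0 < T →
        ∀ d x : ℝ → EuclideanSpace ℝ (Fin n),
          ContinuousOn d (Set.Icc 0 T) →
          (∀ t ∈ Set.Icc (0 : ℝ) T,
            HasDerivWithinAt x
              ((EuclideanSpace.equiv (Fin n) ℝ).symm
                  (A.mulVec (x t) + (B * K).mulVec (x 0)) + d t)
              (Set.Icc 0 T) t) →
          ∀ t ∈ Set.Icc (0 : ℝ) (min T τd),
            ‖x 0 - x t‖ ≤ σ * (‖x t‖ + sSup ((fun u => ‖d u‖) '' Set.Icc 0 t)) :=
  stmt_17_general n m A B K σ hσ cA cΦ hcA hA hΦ τd τm hτd hτm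
end
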